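/- arXiv:1904.09016 — 4 statements merged into one kernel-verified Lean document; each statement's English description precedes it below -/
import Mathlib

section
/- Let a, b > 0 with a + b < 1. If u, v ≥ 0 satisfy u²/(1+u) ≤ a·u + b·v and v²/(1+v) ≤ a·v + b·u, then u ≤ (a+b)/(1−a−b) and v ≤ (a+b)/(1−a−b). -/
/-! The larger of `u` and `v`, say `u`, satisfies `u ^ 2 / (1 + u) ≤ (a + b) * u`, that is
`u / (1 + u) ≤ a + b` when `u > 0`, and solving for `u` gives the bound for both. -/

lemma le_div_one_sub_of_sq_div_one_add_le_mul {c u : ℝ} (hc : 0 ≤ c) (hc1 : c < 1) (hu : 0 ≤ u)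
    (h : u ^ 2 / (1 + u) ≤ c * u) : u ≤ c / (1 - c) := by
  rw [div_le_iff₀ (by linarith)] at h
  rw [le_div_iff₀ (by linarith)]
  nlinarith [mul_nonneg hu hu]

lemma sq_div_one_add_le_add_mul_of_le {a b u v : ℝ} (hb : 0 ≤ b) (hvu : v ≤ u)
    (h : u ^ 2 / (1 + u) ≤ a * u + b * v) : u ^ 2 / (1 + u) ≤ (a + b) * u := by
  nlinarith [mul_le_mul_of_nonneg_left hvu hb]

theorem stmt_0 (a b u v : ℝ) (ha : 0 < a) (hb : 0 < b) (hab : a + b < 1)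
    (hu : 0 ≤ u) (hv : 0 ≤ v)
    (h1 : u ^ 2 / (1 + u) ≤ a * u + b * v) (h2 : v ^ 2 / (1 + v) ≤ a * v + b * u) :
    u ≤ (a + b) / (1 - a - b) ∧ v ≤ (a + b) / (1 - a - b) := by
  wlog hvu : v ≤ u generalizing u v
  · exact (this v u hv hu h2 h1 (le_of_not_ge hvu)).symm
  have hu_le : u ≤ (a + b) / (1 - (a + b)) :=
    le_div_one_sub_of_sq_div_one_add_le_mul (by linarith) hab hu
      (sq_div_one_add_le_add_mul_of_le hb.le hvu h1)
  rw [← sub_sub] at hu_le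
  exact ⟨hu_le, hvu.trans hu_le⟩
end

section
/- Let ψ : D → ℝ be a standard self-concordant function on an open convex set D ⊆ ℝᵖ with positive definite Hessian everywhere, and let x* ∈ D satisfy ∇ψ(x*) = 0. If x̃ ∈ D satisfies ‖∇ψ(x̃)‖*_{x̃} ≤ δ/(1+δ) for some δ ∈ [0,1), then ‖x̃ − x*‖_{x̃} ≤ δ, where ‖u‖_{x̃} := (uᵀ∇²ψ(x̃)u)^{1/2} and ‖v‖*_{x̃} := (vᵀ∇²ψ(x̃)⁻¹v)^{1/2}. -/
/-!
Restrict to the segment `c t = x̃ + t • h`, `h = x* - x̃`. The function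
`q t = ⟪∇²ψ(c t) h, h⟫` satisfies `|q'| ≤ 2 q^{3/2}`, so `q^{-1/2}` grows at most at unit
speed and `q t ≥ (σ⁻¹ + t)⁻²` with `σ = ‖h‖_{x̃}`. Integrating `q` along the segment gives
`⟪∇ψ(x̃) - ∇ψ(x*), x̃ - x*⟫ ≥ σ² / (1 + σ)`, while Cauchy–Schwarz for the local norm and its
dual bounds the left side by `‖∇ψ(x̃)‖*_{x̃} σ ≤ δ σ / (1 + δ)`. As `s ↦ s / (1 + s)` is
increasing, `σ ≤ δ`.
-/

open scoped RealInnerProductSpace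

open Set

theorem monotoneOn_Icc_of_hasDerivAt_nonneg {f f' : ℝ → ℝ} {a b : ℝ}
    (hf : ∀ t ∈ Icc a b, HasDerivAt f (f' t) t) (hf' : ∀ t ∈ Icc a b, 0 ≤ f' t) :
    MonotoneOn f (Icc a b) :=
  monotoneOn_of_hasDerivWithinAt_nonneg (convex_Icc a b)
    (fun t ht => (hf t ht).continuousAt.continuousWithinAt)
    (fun t ht => (hf t (interior_subset ht)).hasDerivWithinAt)
    (fun t ht => hf' t (interior_subset ht))

section Line

variable {q q' : ℝ → ℝ}

theorem inv_sqrt_le_inv_sqrt_add_sub_of_abs_deriv_le {a b : ℝ}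
    (hq : ∀ t ∈ Icc a b, HasDerivAt q (q' t) t)
    (hpos : ∀ t ∈ Icc a b, 0 < q t) (hsc : ∀ t ∈ Icc a b, |q' t| ≤ 2 * √(q t) ^ 3)
    {t : ℝ} (ht : t ∈ Icc a b) :
    (√(q t))⁻¹ ≤ (√(q a))⁻¹ + (t - a) := by
  have hderiv : ∀ s ∈ Icc a b, HasDerivAt (fun s => s - (√(q s))⁻¹)
      (1 - -(q' s / (2 * √(q s))) / √(q s) ^ 2) s := fun s hs =>
    (hasDerivAt_id s).sub (((hq s hs).sqrt (hpos s hs).ne').inv (Real.sqrt_pos.2 (hpos s hs)).ne')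
  have hderiv_nonneg : ∀ s ∈ Icc a b, 0 ≤ 1 - -(q' s / (2 * √(q s))) / √(q s) ^ 2 := by
    intro s hs
    have hsqrt : 0 < √(q s) := Real.sqrt_pos.2 (hpos s hs)
    have hcube : -(√(q s) ^ 2) * (2 * √(q s)) = -(2 * √(q s) ^ 3) := by ring
    rw [sub_nonneg, div_le_one (by positivity), neg_le, le_div_iff₀ (by positivity), hcube]
    exact neg_le_of_abs_le (hsc s hs)
  have := monotoneOn_Icc_of_hasDerivAt_nonneg hderiv hderiv_nonneg
    (left_mem_Icc.2 (ht.1.trans ht.2)) ht ht.1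
  simp only at this
  linarith

theorem sq_div_one_add_le_sub_of_abs_deriv_le {φ : ℝ → ℝ}
    (hφ : ∀ t ∈ Icc (0 : ℝ) 1, HasDerivAt φ (q t) t)
    (hq : ∀ t ∈ Icc (0 : ℝ) 1, HasDerivAt q (q' t) t)
    (hpos : ∀ t ∈ Icc (0 : ℝ) 1, 0 < q t) (hsc : ∀ t ∈ Icc (0 : ℝ) 1, |q' t| ≤ 2 * √(q t) ^ 3) :
    √(q 0) ^ 2 / (1 + √(q 0)) ≤ φ 1 - φ 0 := by
  set σ := √(q 0)
  have hσpos : 0 < σ := Real.sqrt_pos.2 (hpos 0 (left_mem_Icc.2 zero_le_one))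
  have hlower : ∀ t ∈ Icc (0 : ℝ) 1, ((σ⁻¹ + t)⁻¹) ^ 2 ≤ q t := by
    intro t ht
    have h := inv_anti₀ (inv_pos.2 (Real.sqrt_pos.2 (hpos t ht)))
      (by simpa using inv_sqrt_le_inv_sqrt_add_sub_of_abs_deriv_le hq hpos hsc ht)
    rw [inv_inv] at h
    calc ((σ⁻¹ + t)⁻¹) ^ 2 ≤ √(q t) ^ 2 := pow_le_pow_left₀ (by positivity [ht.1]) h 2
      _ = q t := Real.sq_sqrt (hpos t ht).le
  have hderiv : ∀ t ∈ Icc (0 : ℝ) 1,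
      HasDerivAt (fun t => φ t + (σ⁻¹ + t)⁻¹) (q t + -1 / (σ⁻¹ + t) ^ 2) t := by
    intro t ht
    have : σ⁻¹ + t ≠ 0 := by have := ht.1; positivity
    exact (hφ t ht).add (((hasDerivAt_id t).const_add σ⁻¹).inv this)
  have hderiv_nonneg : ∀ t ∈ Icc (0 : ℝ) 1, 0 ≤ q t + -1 / (σ⁻¹ + t) ^ 2 := by
    intro t ht
    have := hlower t ht
    rw [inv_pow, ← one_div] at this
    rw [neg_div]
    linarith
  have hmono := monotoneOn_Icc_of_hasDerivAt_nonneg hderiv hderiv_nonneg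
    (left_mem_Icc.2 zero_le_one) (right_mem_Icc.2 zero_le_one) zero_le_one
  have hkey : (σ⁻¹)⁻¹ - (σ⁻¹ + 1)⁻¹ = σ ^ 2 / (1 + σ) := by
    field_simp
    ring
  simp only [add_zero] at hmono
  linarith

end Line

section LocalNorm

variable {E : Type*} [NormedAddCommGroup E] [InnerProductSpace ℝ E]

theorem sq_div_one_add_le_inner_sub_of_selfConcordant {D : Set E} (hD : Convex ℝ D) {g : E → E}
    {H : E → E →L[ℝ] E} {T : E → E →L[ℝ] E →L[ℝ] E}
    (hg : ∀ x ∈ D, HasFDerivAt g (H x) x) (hH : ∀ x ∈ D, HasFDerivAt H (T x) x)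
    (hpos : ∀ x ∈ D, ∀ u, u ≠ 0 → 0 < ⟪H x u, u⟫)
    (hsc : ∀ x ∈ D, ∀ u, |⟪T x u u, u⟫| ≤ 2 * √⟪H x u, u⟫ ^ 3)
    {x y : E} (hx : x ∈ D) (hy : y ∈ D) :
    √⟪H x (x - y), x - y⟫ ^ 2 / (1 + √⟪H x (x - y), x - y⟫) ≤ ⟪g x - g y, x - y⟫ := by
  rcases eq_or_ne y x with rfl | hne
  · simp
  set h := y - x
  have hh : h ≠ 0 := sub_ne_zero.2 hne
  set c : ℝ → E := fun t => x + t • h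
  have hc : ∀ t ∈ Icc (0 : ℝ) 1, c t ∈ D := fun t ht =>
    hD.add_smul_sub_mem hx hy ht
  have hc' : ∀ t, HasDerivAt c h t := fun t => by
    simpa [c] using ((hasDerivAt_id t).smul_const h).const_add x
  have hφ : ∀ t ∈ Icc (0 : ℝ) 1, HasDerivAt (fun t => ⟪g (c t), h⟫) ⟪H (c t) h, h⟫ t :=
    fun t ht => by
      simpa using ((hg _ (hc t ht)).comp_hasDerivAt t (hc' t)).inner ℝ (hasDerivAt_const t h)
  have hq : ∀ t ∈ Icc (0 : ℝ) 1,
      HasDerivAt (fun t => ⟪H (c t) h, h⟫) ⟪T (c t) h h, h⟫ t := fun t ht => by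
    have hHc := (hH _ (hc t ht)).comp_hasDerivAt t (hc' t)
    simpa using (hHc.clm_apply (hasDerivAt_const t h)).inner ℝ (hasDerivAt_const t h)
  have := sq_div_one_add_le_sub_of_abs_deriv_le hφ hq (fun t ht => hpos _ (hc t ht) h hh)
    (fun t ht => hsc _ (hc t ht) h)
  have hc0 : c 0 = x := by simp [c]
  have hc1 : c 1 = y := by simp [c, h]
  rw [← neg_sub y x, map_neg, inner_neg_neg, inner_neg_right, ← inner_neg_left, neg_sub,
    inner_sub_left]
  simpa only [hc0, hc1] using this

theorem inner_le_sqrt_mul_sqrt_of_rightInverse {A B : E →L[ℝ] E}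
    (hsym : ∀ u v, ⟪A u, v⟫ = ⟪u, A v⟫) (hnonneg : ∀ u, 0 ≤ ⟪A u, u⟫) (hAB : ∀ v, A (B v) = v)
    (v u : E) :
    ⟪v, u⟫ ≤ √⟪B v, v⟫ * √⟪A u, u⟫ := by
  have hcs : ⟪v, u⟫ ^ 2 ≤ ⟪B v, v⟫ * ⟪A u, u⟫ := by
    have := LinearMap.BilinForm.apply_mul_apply_le_of_forall_zero_le
      (LinearMap.BilinForm.compLeft (innerₗ E) (A : E →ₗ[ℝ] E)) hnonneg (B v) u
    simp only [LinearMap.BilinForm.compLeft_apply, ContinuousLinearMap.coe_coe,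
      innerₗ_apply_apply, hAB] at this
    rwa [hsym u (B v), hAB, real_inner_comm v u, real_inner_comm (B v) v, ← sq] at this
  have hBv : 0 ≤ ⟪B v, v⟫ := by simpa only [hAB, real_inner_comm] using hnonneg (B v)
  rw [← Real.sqrt_mul hBv]
  exact (le_abs_self _).trans (Real.abs_le_sqrt hcs)

end LocalNorm

theorem stmt_7_general {p : ℕ}
    (D : Set (EuclideanSpace ℝ (Fin p))) (hDconv : Convex ℝ D)
    (g : EuclideanSpace ℝ (Fin p) → EuclideanSpace ℝ (Fin p))
    (H : EuclideanSpace ℝ (Fin p) → EuclideanSpace ℝ (Fin p) →L[ℝ] EuclideanSpace ℝ (Fin p))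
    (T : EuclideanSpace ℝ (Fin p) →
      EuclideanSpace ℝ (Fin p) →L[ℝ] EuclideanSpace ℝ (Fin p) →L[ℝ] EuclideanSpace ℝ (Fin p))
    (hhess : ∀ x ∈ D, HasFDerivAt g (H x) x)
    (hthird : ∀ x ∈ D, HasFDerivAt H (T x) x)
    (hsym : ∀ x ∈ D, ∀ u v, ⟪H x u, v⟫ = ⟪u, H x v⟫)
    (hpos : ∀ x ∈ D, ∀ u, u ≠ 0 → 0 < ⟪H x u, u⟫)
    (hsc : ∀ x ∈ D, ∀ u, |⟪T x u u, u⟫| ≤ 2 * Real.sqrt ⟪H x u, u⟫ ^ 3)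
    (xstar : EuclideanSpace ℝ (Fin p)) (hxstar : xstar ∈ D) (hcrit : g xstar = 0)
    (xt : EuclideanSpace ℝ (Fin p)) (hxt : xt ∈ D)
    (Hinv : EuclideanSpace ℝ (Fin p) →L[ℝ] EuclideanSpace ℝ (Fin p))
    (hHinv : ∀ v, H xt (Hinv v) = v)
    (δ : ℝ) (hδ0 : 0 ≤ δ)
    (hacc : Real.sqrt ⟪Hinv (g xt), g xt⟫ ≤ δ / (1 + δ)) :
    Real.sqrt ⟪H xt (xt - xstar), xt - xstar⟫ ≤ δ := by
  set σ := √⟪H xt (xt - xstar), xt - xstar⟫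
  have hnonneg : ∀ u, 0 ≤ ⟪H xt u, u⟫ := fun u =>
    (eq_or_ne u 0).elim (fun hu => by simp [hu]) (fun hu => (hpos xt hxt u hu).le)
  have hbound : σ ^ 2 / (1 + σ) ≤ δ / (1 + δ) * σ :=
    calc σ ^ 2 / (1 + σ) ≤ ⟪g xt - g xstar, xt - xstar⟫ :=
          sq_div_one_add_le_inner_sub_of_selfConcordant hDconv hhess hthird hpos hsc hxt hxstar
      _ = ⟪g xt, xt - xstar⟫ := by rw [hcrit, sub_zero]
      _ ≤ √⟪Hinv (g xt), g xt⟫ * σ :=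
          inner_le_sqrt_mul_sqrt_of_rightInverse (hsym xt hxt) hnonneg hHinv _ _
      _ ≤ δ / (1 + δ) * σ := mul_le_mul_of_nonneg_right hacc (Real.sqrt_nonneg _)
  have hσ : 0 ≤ σ := Real.sqrt_nonneg _
  rw [div_le_iff₀ (by positivity), div_mul_eq_mul_div, div_mul_eq_mul_div,
    le_div_iff₀ (by positivity)] at hbound
  nlinarith

theorem stmt_7 {p : ℕ}
    (D : Set (EuclideanSpace ℝ (Fin p))) (hD : IsOpen D) (hDconv : Convex ℝ D)
    (ψ : EuclideanSpace ℝ (Fin p) → ℝ)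
    (g : EuclideanSpace ℝ (Fin p) → EuclideanSpace ℝ (Fin p))
    (H : EuclideanSpace ℝ (Fin p) → EuclideanSpace ℝ (Fin p) →L[ℝ] EuclideanSpace ℝ (Fin p))
    (T : EuclideanSpace ℝ (Fin p) →
      EuclideanSpace ℝ (Fin p) →L[ℝ] EuclideanSpace ℝ (Fin p) →L[ℝ] EuclideanSpace ℝ (Fin p))
    (hgrad : ∀ x ∈ D, HasGradientAt ψ (g x) x)
    (hhess : ∀ x ∈ D, HasFDerivAt g (H x) x)
    (hthird : ∀ x ∈ D, HasFDerivAt H (T x) x)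
    (hsym : ∀ x ∈ D, ∀ u v, ⟪H x u, v⟫ = ⟪u, H x v⟫)
    (hpos : ∀ x ∈ D, ∀ u, u ≠ 0 → 0 < ⟪H x u, u⟫)
    (hsc : ∀ x ∈ D, ∀ u, |⟪T x u u, u⟫| ≤ 2 * Real.sqrt ⟪H x u, u⟫ ^ 3)
    (xstar : EuclideanSpace ℝ (Fin p)) (hxstar : xstar ∈ D) (hcrit : g xstar = 0)
    (xt : EuclideanSpace ℝ (Fin p)) (hxt : xt ∈ D)
    (Hinv : EuclideanSpace ℝ (Fin p) →L[ℝ] EuclideanSpace ℝ (Fin p))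
    (hHinv : ∀ v, H xt (Hinv v) = v) (hHinv' : ∀ v, Hinv (H xt v) = v)
    (δ : ℝ) (hδ0 : 0 ≤ δ) (hδ1 : δ < 1)
    (hacc : Real.sqrt ⟪Hinv (g xt), g xt⟫ ≤ δ / (1 + δ)) :
    Real.sqrt ⟪H xt (xt - xstar), xt - xstar⟫ ≤ δ :=
  stmt_7_general D hDconv g H T hhess hthird hsym hpos hsc xstar hxstar hcrit xt hxt Hinv hHinv δ
    hδ0 hacc
end

section
/- For the step-size α_j := (λ̂ − ε − δ)(1−δ)² / ((1 + (1−δ)(λ̂ − ε − δ))·λ̂) with 0 ≤ ε, δ and 0 < ε + δ < λ̂, the function ζ(α) := α·(λ̂² − (ε+δ)·λ̂) − ω*(α·λ̂/(1−δ)) attains the value ζ(α_j) = ω((λ̂ − ε − δ)(1−δ)), where ω(τ) := τ − ln(1+τ) and ω*(τ) := −τ − ln(1−τ). -/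
/-! With `τ = (λ̂ - ε - δ)(1 - δ)`, the step `α_j` is chosen so that `α_j λ̂ / (1 - δ) = τ / (1 + τ)`
and `α_j (λ̂² - (ε + δ) λ̂) = τ · τ / (1 + τ)`. Since `ω*` is the convex conjugate of `ω` and
`τ / (1 + τ) = ω'(τ)`, the Fenchel–Young equality `ω*(ω'(τ)) = τ ω'(τ) - ω(τ)` gives `ζ(α_j) = ω(τ)`. -/

namespace DampedStep

noncomputable def omega (τ : ℝ) : ℝ := τ - Real.log (1 + τ)

/-- The convex conjugate of `omega`. -/
noncomputable def omegaStar (s : ℝ) : ℝ := -s - Real.log (1 - s)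

theorem omegaStar_div_one_add {τ : ℝ} (hτ : -1 < τ) :
    omegaStar (τ / (1 + τ)) = τ * (τ / (1 + τ)) - omega τ := by
  have h : 1 + τ ≠ 0 := by linarith
  have hsub : 1 - τ / (1 + τ) = (1 + τ)⁻¹ := by field_simp; ring
  rw [omegaStar, omega, hsub, Real.log_inv]
  field_simp
  ring

end DampedStep

open DampedStep in
theorem stmt_13_general (lam eps del : ℝ) (heps : 0 ≤ eps) (hdel : 0 ≤ del) (hdel1 : del < 1)
    (hlt : eps + del < lam) :
    (fun α : ℝ => α * (lam ^ 2 - (eps + del) * lam)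
        - (-(α * lam / (1 - del)) - Real.log (1 - α * lam / (1 - del))))
      ((lam - eps - del) * (1 - del) ^ 2 / ((1 + (1 - del) * (lam - eps - del)) * lam))
    = (lam - eps - del) * (1 - del) - Real.log (1 + (lam - eps - del) * (1 - del)) := by
  set τ := (lam - eps - del) * (1 - del) with hτ
  have hlam : lam ≠ 0 := by linarith
  have hdel1' : 1 - del ≠ 0 := by linarith
  have hτpos : 0 < τ := mul_pos (by linarith) (by linarith)
  have hden : (1 + (1 - del) * (lam - eps - del)) * lam ≠ 0 := by
    rw [mul_comm (1 - del)]; positivity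
  have hscaled : (lam - eps - del) * (1 - del) ^ 2 / ((1 + (1 - del) * (lam - eps - del)) * lam)
      * lam / (1 - del) = τ / (1 + τ) := by
    rw [hτ]; field_simp
  have hlinear : (lam - eps - del) * (1 - del) ^ 2 / ((1 + (1 - del) * (lam - eps - del)) * lam)
      * (lam ^ 2 - (eps + del) * lam) = τ * (τ / (1 + τ)) := by
    rw [hτ]; field_simp; ring
  have key := omegaStar_div_one_add (show -1 < τ by linarith)
  simp only [omegaStar, omega] at key
  simp only [hscaled, hlinear, key]
  ring

theorem stmt_13 (lam eps del : ℝ) (heps : 0 ≤ eps) (hdel : 0 ≤ del) (hdel1 : del < 1)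
    (hpos : 0 < eps + del) (hlt : eps + del < lam) :
    (fun α : ℝ => α * (lam ^ 2 - (eps + del) * lam)
        - (-(α * lam / (1 - del)) - Real.log (1 - α * lam / (1 - del))))
      ((lam - eps - del) * (1 - del) ^ 2 / ((1 + (1 - del) * (lam - eps - del)) * lam))
    = (lam - eps - del) * (1 - del) - Real.log (1 + (lam - eps - del) * (1 - del)) :=
  stmt_13_general lam eps del heps hdel hdel1 hlt
end

section
/- Let H, H̃ be symmetric positive definite p×p matrices with (1−δ)²·H̃ ⪯ H ⪯ (1−δ)⁻²·H̃ for some δ ∈ [0,1). Then for every vector w, the quadratic form of (H̃ − H) satisfies wᵀ(H̃ − H)H⁻¹(H̃ − H)w ≤ (2/(1−δ)² − 2)·wᵀH̃w, i.e., the dual H-norm of (H̃ − H)w is at most √(4δ − 2δ²)/(1−δ) times the H̃-norm of w. -/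
/-! With `u = H⁻¹ H̃ w` one has `wᵀH̃H⁻¹H̃w = uᵀHu = wᵀH̃u`, and `(1-δ)²H̃ ⪯ H` together with
`0 ≤ (c u - w)ᵀH̃(c u - w)`, `c = (1-δ)²`, gives `H̃H⁻¹H̃ ⪯ c⁻¹H̃`. Expanding
`(H̃ - H)H⁻¹(H̃ - H) = H̃H⁻¹H̃ - 2H̃ + H` and using `H ⪯ c⁻¹H̃` bounds the form by `(2/c - 2) H̃`;
the norm version is its square root, since `2/c - 2 = (4δ - 2δ²)/(1-δ)²`. -/

open Matrix

namespace Matrix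

lemma PosSemidef.isSymm {n : Type*} {M : Matrix n n ℝ} (hM : M.PosSemidef) : M.IsSymm :=
  isHermitian_iff_isSymm.mp hM.1

variable {n : Type*} [Fintype n]

lemma IsSymm.dotProduct_mulVec_comm {M : Matrix n n ℝ} (hM : M.IsSymm) (x y : n → ℝ) :
    x ⬝ᵥ M *ᵥ y = y ⬝ᵥ M *ᵥ x := by
  rw [dotProduct_mulVec, ← mulVec_transpose, hM.eq, dotProduct_comm]

lemma IsSymm.mulVec_dotProduct_mulVec_mulVec {M : Matrix n n ℝ} (hM : M.IsSymm)
    (N : Matrix n n ℝ) (w : n → ℝ) :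
    (M *ᵥ w) ⬝ᵥ N *ᵥ (M *ᵥ w) = w ⬝ᵥ (M * N * M) *ᵥ w := by
  rw [← mulVec_mulVec, ← mulVec_mulVec, dotProduct_mulVec w, ← mulVec_transpose, hM.eq]

lemma dotProduct_mulVec_le_of_posSemidef_sub {A B : Matrix n n ℝ} (h : (B - A).PosSemidef)
    (x : n → ℝ) : x ⬝ᵥ A *ᵥ x ≤ x ⬝ᵥ B *ᵥ x := by
  have := h.dotProduct_mulVec_nonneg x
  rw [star_trivial, sub_mulVec, dotProduct_sub] at this
  linarith

variable [DecidableEq n]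

lemma sub_mul_nonsing_inv_mul_sub {α : Type*} [CommRing α] {H : Matrix n n α}
    (hH : IsUnit H.det) (K : Matrix n n α) :
    (K - H) * H⁻¹ * (K - H) = K * H⁻¹ * K - 2 • K + H := by
  have expand : (K - H) * H⁻¹ * (K - H)
      = K * H⁻¹ * K - K * H⁻¹ * H - H * H⁻¹ * K + H * H⁻¹ * H := by
    noncomm_ring
  rw [expand, nonsing_inv_mul_cancel_right _ _ hH, mul_nonsing_inv _ hH, Matrix.one_mul,
    Matrix.one_mul, two_smul]
  abel

lemma dotProduct_mul_nonsing_inv_mul_mulVec_le {H K : Matrix n n ℝ} (hH : IsUnit H.det)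
    (hK : K.PosSemidef) {c : ℝ} (hc : 0 < c) (hle : (H - c • K).PosSemidef) (w : n → ℝ) :
    w ⬝ᵥ (K * H⁻¹ * K) *ᵥ w ≤ c⁻¹ * (w ⬝ᵥ K *ᵥ w) := by
  set u := H⁻¹ *ᵥ (K *ᵥ w)
  have hHu : H *ᵥ u = K *ᵥ w := by
    rw [mulVec_mulVec, mul_nonsing_inv _ hH, one_mulVec]
  have hform_K : w ⬝ᵥ (K * H⁻¹ * K) *ᵥ w = w ⬝ᵥ K *ᵥ u := by
    rw [← mulVec_mulVec, ← mulVec_mulVec]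
  have hform_H : w ⬝ᵥ (K * H⁻¹ * K) *ᵥ w = u ⬝ᵥ H *ᵥ u := by
    rw [hform_K, hHu, hK.isSymm.dotProduct_mulVec_comm]
  have hcK : c * (u ⬝ᵥ K *ᵥ u) ≤ u ⬝ᵥ H *ᵥ u := by
    simpa [smul_mulVec, dotProduct_smul] using dotProduct_mulVec_le_of_posSemidef_sub hle u
  have hsq : 0 ≤ (c • u - w) ⬝ᵥ K *ᵥ (c • u - w) := by
    simpa using hK.dotProduct_mulVec_nonneg (c • u - w)
  have hexpand : (c • u - w) ⬝ᵥ K *ᵥ (c • u - w)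
      = c ^ 2 * (u ⬝ᵥ K *ᵥ u) - 2 * c * (w ⬝ᵥ K *ᵥ u) + w ⬝ᵥ K *ᵥ w := by
    simp only [mulVec_sub, mulVec_smul, sub_dotProduct, dotProduct_sub, smul_dotProduct,
      dotProduct_smul, smul_eq_mul, hK.isSymm.dotProduct_mulVec_comm u w]
    ring
  have hcK' : c ^ 2 * (u ⬝ᵥ K *ᵥ u) ≤ c * (w ⬝ᵥ K *ᵥ u) := by
    rw [pow_two, mul_assoc, ← hform_K, hform_H]
    exact mul_le_mul_of_nonneg_left hcK hc.le
  rw [le_inv_mul_iff₀ hc, hform_K]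
  linarith

lemma dotProduct_sub_mul_nonsing_inv_mul_sub_mulVec_le {H K : Matrix n n ℝ} (hH : IsUnit H.det)
    (hK : K.PosSemidef) {c : ℝ} (hc : 0 < c) (hlow : (H - c • K).PosSemidef)
    (hup : (c⁻¹ • K - H).PosSemidef) (w : n → ℝ) :
    w ⬝ᵥ ((K - H) * H⁻¹ * (K - H)) *ᵥ w ≤ (2 / c - 2) * (w ⬝ᵥ K *ᵥ w) := by
  have hKHK := dotProduct_mul_nonsing_inv_mul_mulVec_le hH hK hc hlow w
  have hH_le : w ⬝ᵥ H *ᵥ w ≤ c⁻¹ * (w ⬝ᵥ K *ᵥ w) := by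
    simpa [smul_mulVec, dotProduct_smul] using dotProduct_mulVec_le_of_posSemidef_sub hup w
  rw [sub_mul_nonsing_inv_mul_sub hH, add_mulVec, sub_mulVec, smul_mulVec, dotProduct_add,
    dotProduct_sub, dotProduct_smul, two_smul, div_eq_mul_inv]
  linarith

end Matrix

open Matrix in
theorem stmt_17 {p : ℕ} (H Ht : Matrix (Fin p) (Fin p) ℝ)
    (hH : H.PosDef) (hHt : Ht.PosDef) (δ : ℝ) (hδ0 : 0 ≤ δ) (hδ1 : δ < 1)
    (hlow : (H - (1 - δ) ^ 2 • Ht).PosSemidef)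
    (hup : ((((1 - δ) ^ 2)⁻¹) • Ht - H).PosSemidef) :
    ∀ w : Fin p → ℝ,
      w ⬝ᵥ ((Ht - H) * H⁻¹ * (Ht - H)) *ᵥ w ≤ (2 / (1 - δ) ^ 2 - 2) * (w ⬝ᵥ Ht *ᵥ w) ∧
      Real.sqrt (((Ht - H) *ᵥ w) ⬝ᵥ H⁻¹ *ᵥ ((Ht - H) *ᵥ w)) ≤
        Real.sqrt (4 * δ - 2 * δ ^ 2) / (1 - δ) * Real.sqrt (w ⬝ᵥ Ht *ᵥ w) := by
  intro w
  have hδ : 0 < 1 - δ := by linarith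
  have hquad := dotProduct_sub_mul_nonsing_inv_mul_sub_mulVec_le
    ((isUnit_iff_isUnit_det H).mp hH.isUnit) hHt.posSemidef (by positivity) hlow hup w
  refine ⟨hquad, ?_⟩
  have hcoef : 2 / (1 - δ) ^ 2 - 2 = (4 * δ - 2 * δ ^ 2) / (1 - δ) ^ 2 := by
    field_simp
    ring
  have hnum : 0 ≤ 4 * δ - 2 * δ ^ 2 := by nlinarith
  rw [(hHt.posSemidef.isSymm.sub hH.posSemidef.isSymm).mulVec_dotProduct_mulVec_mulVec]
  calc √(w ⬝ᵥ ((Ht - H) * H⁻¹ * (Ht - H)) *ᵥ w)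
      ≤ √((4 * δ - 2 * δ ^ 2) / (1 - δ) ^ 2 * (w ⬝ᵥ Ht *ᵥ w)) := by
        rw [← hcoef]
        exact Real.sqrt_le_sqrt hquad
    _ = √(4 * δ - 2 * δ ^ 2) / (1 - δ) * √(w ⬝ᵥ Ht *ᵥ w) := by
        rw [Real.sqrt_mul (by positivity), Real.sqrt_div hnum, Real.sqrt_sq hδ.le]
end
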